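/- For φ ∈ [−π/2, 0], define λ(φ) = (2 cos φ + 2 cos φ sin φ)/8 and λ'(φ) = (−2 sin φ + 2 cos 2φ)/8, and set ṡ(φ) = 2λ(φ)·cos φ − λ'(φ)·sin φ and ν̇(φ) = 2λ(φ)·sin φ + λ'(φ)·cos φ. Then for every φ ∈ [−π/2, 0] one has 0 ≤ ν̇(φ) ≤ ṡ(φ)/2. -/

import Mathlib

open Real

/-!
Writing `c = cos φ`, `s = sin φ` and `cos 2φ = 1 - 2s²`, both `λ` and `λ'` carry the factor `1 + s`,
and with `c² = 1 - s²` the two components collapse to `ν̇ = c (1 + s) / 4` and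
`ṡ = (1 + s)(2 - s) / 4`. Hence `ṡ / 2 - ν̇ = (1 + s)(2 - s - 2c) / 8`, and on `[-π/2, 0]` every
factor is nonnegative because `c ∈ [0, 1]` and `s ∈ [-1, 0]`.
-/

namespace ConvexElastica

noncomputable section

def profile (φ : ℝ) : ℝ := (2 * cos φ + 2 * cos φ * sin φ) / 8

def profileDeriv (φ : ℝ) : ℝ := (-2 * sin φ + 2 * cos (2 * φ)) / 8

def sDot (φ : ℝ) : ℝ := 2 * profile φ * cos φ - profileDeriv φ * sin φ

def nuDot (φ : ℝ) : ℝ := 2 * profile φ * sin φ + profileDeriv φ * cos φ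

end

theorem profileDeriv_eq (φ : ℝ) : profileDeriv φ = (1 + sin φ) * (1 - 2 * sin φ) / 4 := by
  rw [profileDeriv, cos_two_mul, cos_sq']
  ring

theorem nuDot_eq (φ : ℝ) : nuDot φ = cos φ * (1 + sin φ) / 4 := by
  rw [nuDot, profileDeriv_eq, profile]
  ring

theorem sDot_eq (φ : ℝ) : sDot φ = (1 + sin φ) * (2 - sin φ) / 4 := by
  rw [sDot, profileDeriv_eq, profile]
  linear_combination (1 + sin φ) / 2 * cos_sq_add_sin_sq φ

theorem sDot_half_sub_nuDot (φ : ℝ) :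
    sDot φ / 2 - nuDot φ = (1 + sin φ) * (2 - sin φ - 2 * cos φ) / 8 := by
  rw [sDot_eq, nuDot_eq]
  ring

end ConvexElastica

open ConvexElastica in
/-- On `φ ∈ [−π/2, 0]`, with `λ(φ) = (2cos φ + 2cos φ sin φ)/8`,
`λ'(φ) = (−2sin φ + 2cos 2φ)/8`, `ṡ = 2λcos φ − λ'sin φ`,
`ν̇ = 2λsin φ + λ'cos φ`, one has `0 ≤ ν̇ ≤ ṡ/2`. -/
theorem stmt_8 (φ : ℝ) (hφ : φ ∈ Set.Icc (-(π/2)) 0) :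
    0 ≤ 2 * ((2 * Real.cos φ + 2 * Real.cos φ * Real.sin φ) / 8) * Real.sin φ
        + ((-2 * Real.sin φ + 2 * Real.cos (2*φ)) / 8) * Real.cos φ ∧
    2 * ((2 * Real.cos φ + 2 * Real.cos φ * Real.sin φ) / 8) * Real.sin φ
        + ((-2 * Real.sin φ + 2 * Real.cos (2*φ)) / 8) * Real.cos φ
      ≤ (2 * ((2 * Real.cos φ + 2 * Real.cos φ * Real.sin φ) / 8) * Real.cos φ
        - ((-2 * Real.sin φ + 2 * Real.cos (2*φ)) / 8) * Real.sin φ) / 2 := by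
  show 0 ≤ nuDot φ ∧ nuDot φ ≤ sDot φ / 2
  obtain ⟨hlo, hhi⟩ := hφ
  have hcos : 0 ≤ cos φ := cos_nonneg_of_mem_Icc ⟨hlo, by linarith [pi_pos]⟩
  have hsin : sin φ ≤ 0 := sin_nonpos_of_nonpos_of_neg_pi_le hhi (by linarith [pi_pos])
  have hsin_add : 0 ≤ 1 + sin φ := by linarith [neg_one_le_sin φ]
  refine ⟨by rw [nuDot_eq]; positivity, sub_nonneg.mp ?_⟩
  rw [sDot_half_sub_nuDot]
  exact div_nonneg (mul_nonneg hsin_add (by linarith [cos_le_one φ])) (by norm_num)
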